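/- arXiv:1909.09777 — 5 statements merged into one kernel-verified Lean document; each statement's English description precedes it below -/
import Mathlib

section
/- Let B = [x1,y1,x2,y2] be a box, 0 < T ≤ 1, and let x̄1 satisfy x1 ≤ x̄1 ≤ x2 − (x2−x1)·T (so the candidate top-left corner lies in Region I). Set Ī = (x2−x̄1)(y2−y1) and define ȳ1 = y2 − (Ī/T + Ī − A(B))/(x2−x̄1). Then the box B̄ = [x̄1, ȳ1, x2, y2] satisfies ȳ1 ≤ y1, ȳ1 < y2, and IoU(B,B̄) = T. -/
structure Box where
  x1 : ℝ
  y1 : ℝ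
  x2 : ℝ
  y2 : ℝ

def Box.valid (B : Box) : Prop := B.x1 < B.x2 ∧ B.y1 < B.y2

noncomputable def area (B : Box) : ℝ := (B.x2 - B.x1) * (B.y2 - B.y1)

noncomputable def inter (B C : Box) : ℝ :=
  (min C.x2 B.x2 - max C.x1 B.x1) * (min C.y2 B.y2 - max C.y1 B.y1)

noncomputable def iou (B C : Box) : ℝ := inter B C / (area B + area C - inter B C)

/-!
With `u = x₂ - x̄₁` and `Ī = u (y₂ - y₁)`, the box `B̄` has area `u (y₂ - ȳ₁) = Ī/T + Ī - A(B)`,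
and since its top-left corner lies in Region I it meets `B` in exactly `Ī`. Hence the union
`A(B) + A(B̄) - Ī` equals `Ī/T`, and the IoU is `T`. The constraint `x̄₁ ≤ x₂ - (x₂ - x₁) T`
says `T A(B) ≤ Ī`, which is what makes `ȳ₁ ≤ y₁`.
-/

theorem area_mk_sub_div (a c d S : ℝ) (h : c ≠ a) :
    area ⟨a, d - S / (c - a), c, d⟩ = S := by
  simp only [area]
  field_simp [sub_ne_zero.mpr h]
  ring

theorem inter_mk_of_le (B : Box) {xb yb : ℝ} (hx : B.x1 ≤ xb) (hy : yb ≤ B.y1) :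
    inter B ⟨xb, yb, B.x2, B.y2⟩ = (B.x2 - xb) * (B.y2 - B.y1) := by
  simp only [inter, min_self, max_eq_left hx, max_eq_right hy]

theorem iou_eq_of_area_eq {B C : Box} {T : ℝ} (hI : inter B C ≠ 0) (hT : T ≠ 0)
    (hC : area C = inter B C / T + inter B C - area B) : iou B C = T := by
  rw [iou, hC, show area B + (inter B C / T + inter B C - area B) - inter B C = inter B C / T
    by ring]
  field_simp

theorem area_le_div_of_mul_le (B : Box) (hB : B.valid) {T xb : ℝ} (hT : 0 < T)
    (hx : xb ≤ B.x2 - (B.x2 - B.x1) * T) :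
    area B ≤ (B.x2 - xb) * (B.y2 - B.y1) / T := by
  rw [le_div_iff₀ hT, area, mul_right_comm]
  exact mul_le_mul_of_nonneg_right (by linarith) (sub_pos.mpr hB.2).le

theorem tl_region_I_curve_general (B : Box) (hB : B.valid) (T : ℝ)
    (hT0 : 0 < T) (xb : ℝ)
    (hx1 : B.x1 ≤ xb) (hx2 : xb ≤ B.x2 - (B.x2 - B.x1) * T) :
    let Ibar : ℝ := (B.x2 - xb) * (B.y2 - B.y1)
    let yb : ℝ := B.y2 - (Ibar / T + Ibar - area B) / (B.x2 - xb)
    yb ≤ B.y1 ∧ yb < B.y2 ∧ iou B ⟨xb, yb, B.x2, B.y2⟩ = T := by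
  intro Ibar yb
  have hu : 0 < B.x2 - xb := lt_of_lt_of_le (mul_pos (sub_pos.mpr hB.1) hT0) (by linarith)
  have hIbar : 0 < Ibar := mul_pos hu (sub_pos.mpr hB.2)
  have hA : area B ≤ Ibar / T := area_le_div_of_mul_le B hB hT0 hx2
  have hyb₁ : yb ≤ B.y1 := by
    have : B.y2 - B.y1 ≤ (Ibar / T + Ibar - area B) / (B.x2 - xb) := by
      rw [le_div_iff₀ hu]
      linarith [mul_comm (B.x2 - xb) (B.y2 - B.y1)]
    linarith
  have hyb₂ : yb < B.y2 := sub_lt_self _ (div_pos (by linarith) hu)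
  have hinter : inter B ⟨xb, yb, B.x2, B.y2⟩ = Ibar := inter_mk_of_le B hx1 hyb₁
  refine ⟨hyb₁, hyb₂, iou_eq_of_area_eq (hinter ▸ hIbar.ne') hT0.ne' ?_⟩
  rw [hinter]
  exact area_mk_sub_div _ _ _ _ (sub_pos.mp hu).ne'

theorem tl_region_I_curve (B : Box) (hB : B.valid) (T : ℝ)
    (hT0 : 0 < T) (hT1 : T ≤ 1) (xb : ℝ)
    (hx1 : B.x1 ≤ xb) (hx2 : xb ≤ B.x2 - (B.x2 - B.x1) * T) :
    let Ibar : ℝ := (B.x2 - xb) * (B.y2 - B.y1)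
    let yb : ℝ := B.y2 - (Ibar / T + Ibar - area B) / (B.x2 - xb)
    yb ≤ B.y1 ∧ yb < B.y2 ∧ iou B ⟨xb, yb, B.x2, B.y2⟩ = T :=
  tl_region_I_curve_general B hB T hT0 xb hx1 hx2
end

section
/- Let B = [x1,y1,x2,y2] and 0 < T ≤ 1. For candidate top-left corners in Region IV (x̄1 ≤ x1 and ȳ1 ≤ y1, bottom-right corner fixed at (x2,y2)), the minimum value of ȳ1 for which a box with IoU exactly T exists is ȳ1_min = (y2·(T−1) + y1)/T; moreover for ȳ1 in the range [ȳ1_min, y1], the unique x̄1 ≤ x1 giving IoU(B,B̄) = T with B̄ = [x̄1,ȳ1,x2,y2] is x̄1 = x2 − A(B)/(T·(y2−ȳ1)). -/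
namespace Box

variable {B : Box} {xb yb T : ℝ}

lemma area_pos (hB : B.valid) : 0 < area B :=
  mul_pos (sub_pos.mpr hB.1) (sub_pos.mpr hB.2)

lemma iou_of_contains (hxb : xb ≤ B.x1) (hyb : yb ≤ B.y1) :
    iou B ⟨xb, yb, B.x2, B.y2⟩ = area B / ((B.x2 - xb) * (B.y2 - yb)) := by
  simp only [iou, inter, area, min_self, max_eq_right hxb, max_eq_right hyb]
  ring_nf

lemma iou_eq_iff_of_contains (hB : B.valid) (hxb : xb ≤ B.x1) (hyb : yb ≤ B.y1) :
    iou B ⟨xb, yb, B.x2, B.y2⟩ = T ↔ area B = T * ((B.x2 - xb) * (B.y2 - yb)) := by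
  have hD : (B.x2 - xb) * (B.y2 - yb) ≠ 0 :=
    mul_ne_zero (by linarith [hB.1]) (by linarith [hB.2])
  rw [iou_of_contains hxb hyb, div_eq_iff hD]

lemma lt_ymin_iff (hT0 : 0 < T) :
    yb < (B.y2 * (T - 1) + B.y1) / T ↔ B.y2 - B.y1 < T * (B.y2 - yb) := by
  rw [lt_div_iff₀ hT0]
  constructor <;> intro h <;> linarith

lemma ymin_le_y1 (hB : B.valid) (hT0 : 0 < T) (hT1 : T ≤ 1) :
    (B.y2 * (T - 1) + B.y1) / T ≤ B.y1 := by
  rw [div_le_iff₀ hT0]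
  nlinarith [hB.2]

lemma iou_lt_of_lt_ymin (hB : B.valid) (hxb : xb ≤ B.x1) (hyb : yb ≤ B.y1)
    (hbelow : B.y2 - B.y1 < T * (B.y2 - yb)) :
    iou B ⟨xb, yb, B.x2, B.y2⟩ < T := by
  have hx : 0 < B.x2 - B.x1 := sub_pos.mpr hB.1
  have hD : 0 < (B.x2 - xb) * (B.y2 - yb) :=
    mul_pos (by linarith) (by linarith [hB.2])
  rw [iou_of_contains hxb hyb, div_lt_iff₀ hD]
  calc area B = (B.x2 - B.x1) * (B.y2 - B.y1) := rfl
    _ < (B.x2 - B.x1) * (T * (B.y2 - yb)) := mul_lt_mul_of_pos_left hbelow hx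
    _ ≤ (B.x2 - xb) * (T * (B.y2 - yb)) :=
        mul_le_mul_of_nonneg_right (by linarith) (by linarith [hB.2])
    _ = T * ((B.x2 - xb) * (B.y2 - yb)) := by ring

lemma area_eq_iff_xb_eq (hT0 : 0 < T) (hyb : yb < B.y2) :
    area B = T * ((B.x2 - xb) * (B.y2 - yb)) ↔ xb = B.x2 - area B / (T * (B.y2 - yb)) := by
  have hTy : T * (B.y2 - yb) ≠ 0 := mul_ne_zero hT0.ne' (sub_ne_zero.mpr hyb.ne')
  rw [eq_sub_iff_add_eq, ← eq_sub_iff_add_eq', div_eq_iff hTy]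
  constructor <;> intro h <;> linear_combination h

end Box

open Box in
theorem tl_region_IV (B : Box) (hB : B.valid) (T : ℝ)
    (hT0 : 0 < T) (hT1 : T ≤ 1) :
    let ymin : ℝ := (B.y2 * (T - 1) + B.y1) / T
    (∀ yb : ℝ, yb < ymin → ¬ ∃ xb : ℝ, xb ≤ B.x1 ∧ iou B ⟨xb, yb, B.x2, B.y2⟩ = T) ∧
    (∀ yb : ℝ, ymin ≤ yb → yb ≤ B.y1 →
      ∀ xb : ℝ, xb ≤ B.x1 →
        (iou B ⟨xb, yb, B.x2, B.y2⟩ = T ↔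
          xb = B.x2 - area B / (T * (B.y2 - yb)))) := by
  intro ymin
  refine ⟨fun yb hyb ⟨xb, hxb, hiou⟩ => ?_, fun yb _ hyb xb hxb => ?_⟩
  · have hyb1 : yb ≤ B.y1 := hyb.le.trans (ymin_le_y1 hB hT0 hT1)
    exact (iou_lt_of_lt_ymin hB hxb hyb1 ((lt_ymin_iff hT0).mp hyb)).ne hiou
  · rw [iou_eq_iff_of_contains hB hxb hyb]
    exact area_eq_iff_xb_eq hT0 (hyb.trans_lt hB.2)
end

section
/- Let B = [x1,y1,x2,y2] and 0 < T ≤ 1, and suppose B̄ = [x̄1,ȳ1,x̄2,ȳ2] satisfies IoU(B,B̄) ≥ T with x̄1 ≥ x1 and ȳ1 ≥ y1 and bottom-right corner equal to that of B (x̄2 = x2, ȳ2 = y2, Region I configuration where B̄ ⊆ B). Then x̄1 ≤ x2 − (x2−x1)·T and ȳ1 ≤ y2 − (y2−y1)·T. Conversely, if both inequalities hold together with (x2−x̄1)(y2−ȳ1) ≥ T·A(B), then IoU(B,B̄) ≥ T. -/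
/-!
When `B̄ ⊆ B` the union of the two boxes is `B` itself, so `IoU(B, B̄) = A(B̄) / A(B)` and the
condition `IoU ≥ T` reads `T · A(B) ≤ A(B̄)`. Since `B̄` is no taller than `B`, this forces its
width to be at least `T` times that of `B`, and symmetrically for the height.
-/

section Subbox

variable {B C : Box}

theorem inter_eq_area_of_subbox (hx1 : B.x1 ≤ C.x1) (hy1 : B.y1 ≤ C.y1) (hx2 : C.x2 ≤ B.x2)
    (hy2 : C.y2 ≤ B.y2) : inter B C = area C := by
  simp only [inter, area, min_eq_left hx2, min_eq_left hy2, max_eq_left hx1, max_eq_left hy1]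

theorem iou_eq_area_div_of_subbox (hx1 : B.x1 ≤ C.x1) (hy1 : B.y1 ≤ C.y1) (hx2 : C.x2 ≤ B.x2)
    (hy2 : C.y2 ≤ B.y2) : iou B C = area C / area B := by
  rw [iou, inter_eq_area_of_subbox hx1 hy1 hx2 hy2, add_sub_cancel_right]

theorem area_pos_of_valid (hB : B.valid) : 0 < area B :=
  mul_pos (sub_pos.2 hB.1) (sub_pos.2 hB.2)

theorem le_iou_iff_of_subbox (hB : B.valid) (hx1 : B.x1 ≤ C.x1) (hy1 : B.y1 ≤ C.y1)
    (hx2 : C.x2 ≤ B.x2) (hy2 : C.y2 ≤ B.y2) {T : ℝ} :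
    T ≤ iou B C ↔ T * area B ≤ area C := by
  rw [iou_eq_area_div_of_subbox hx1 hy1 hx2 hy2, le_div_iff₀ (area_pos_of_valid hB)]

end Subbox

theorem mul_le_of_mul_mul_le_mul {T w h w' h' : ℝ} (hh : 0 < h) (hw' : 0 ≤ w') (hh' : h' ≤ h)
    (H : T * (w * h) ≤ w' * h') : T * w ≤ w' := by
  refine le_of_mul_le_mul_right ?_ hh
  calc T * w * h = T * (w * h) := mul_assoc T w h
    _ ≤ w' * h' := H
    _ ≤ w' * h := mul_le_mul_of_nonneg_left hh' hw'

theorem region_I_feasibility_general (B : Box) (hB : B.valid) (T : ℝ)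
    (xb yb : ℝ)
    (hx1 : B.x1 ≤ xb) (hx2 : xb < B.x2) (hy1 : B.y1 ≤ yb) (hy2 : yb < B.y2) :
    (T ≤ iou B ⟨xb, yb, B.x2, B.y2⟩ →
      xb ≤ B.x2 - (B.x2 - B.x1) * T ∧ yb ≤ B.y2 - (B.y2 - B.y1) * T) ∧
    ((xb ≤ B.x2 - (B.x2 - B.x1) * T ∧ yb ≤ B.y2 - (B.y2 - B.y1) * T ∧
        T * area B ≤ (B.x2 - xb) * (B.y2 - yb)) →
      T ≤ iou B ⟨xb, yb, B.x2, B.y2⟩) := by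
  have hiou := le_iou_iff_of_subbox (C := ⟨xb, yb, B.x2, B.y2⟩) (T := T) hB hx1 hy1 le_rfl le_rfl
  refine ⟨fun h => ?_, fun ⟨_, _, h⟩ => hiou.2 h⟩
  have harea : T * ((B.x2 - B.x1) * (B.y2 - B.y1)) ≤ (B.x2 - xb) * (B.y2 - yb) := hiou.1 h
  have hwidth := mul_le_of_mul_mul_le_mul (sub_pos.2 hB.2) (sub_nonneg.2 hx2.le)
    (sub_le_sub_left hy1 _) harea
  have hheight : T * (B.y2 - B.y1) ≤ B.y2 - yb :=
    mul_le_of_mul_mul_le_mul (sub_pos.2 hB.1) (sub_nonneg.2 hy2.le) (sub_le_sub_left hx1 _)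
      (by rwa [mul_comm (B.y2 - B.y1), mul_comm (B.y2 - yb)])
  constructor <;> linarith

theorem region_I_feasibility (B : Box) (hB : B.valid) (T : ℝ)
    (hT0 : 0 < T) (hT1 : T ≤ 1) (xb yb : ℝ)
    (hx1 : B.x1 ≤ xb) (hx2 : xb < B.x2) (hy1 : B.y1 ≤ yb) (hy2 : yb < B.y2) :
    (T ≤ iou B ⟨xb, yb, B.x2, B.y2⟩ →
      xb ≤ B.x2 - (B.x2 - B.x1) * T ∧ yb ≤ B.y2 - (B.y2 - B.y1) * T) ∧
    ((xb ≤ B.x2 - (B.x2 - B.x1) * T ∧ yb ≤ B.y2 - (B.y2 - B.y1) * T ∧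
        T * area B ≤ (B.x2 - xb) * (B.y2 - yb)) →
      T ≤ iou B ⟨xb, yb, B.x2, B.y2⟩) :=
  region_I_feasibility_general B hB T xb yb hx1 hx2 hy1 hy2
end

section
/- The set of feasible top-left corners degenerates as T → 1: for a box B = [x1,y1,x2,y2] and threshold T ∈ (0,1], every box B̄ = [x̄1,ȳ1,x2,y2] (sharing B's bottom-right corner) with IoU(B,B̄) ≥ T has |x̄1 − x1| ≤ (1−T)/T · (x2−x1) and |ȳ1 − y1| ≤ (1−T)/T · (y2−y1). In particular, when T = 1 the only feasible top-left corner is (x1,y1). -/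
/-!
Let `a × b` and `c × d` be the side lengths of `B` and `B̄`. Since the boxes share a corner, their
intersection is `min a c × min b d`, and their union contains a `max a c × min b d` rectangle.
Hence `IoU ≥ T` forces `T · max a c ≤ min a c`, i.e. `T · |a - c| ≤ (1 - T) · min a c`,
and likewise for the heights.
-/

/-- The IoU of an `a × b` and a `c × d` rectangle sharing a corner. -/
noncomputable def cornerIoU (a b c d : ℝ) : ℝ :=
  min a c * min b d / (a * b + c * d - min a c * min b d)

lemma cornerIoU_comm (a b c d : ℝ) : cornerIoU a b c d = cornerIoU b a d c := by
  unfold cornerIoU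
  ring

lemma iou_eq_cornerIoU (B : Box) (xb yb : ℝ) :
    iou B ⟨xb, yb, B.x2, B.y2⟩ =
      cornerIoU (B.x2 - B.x1) (B.y2 - B.y1) (B.x2 - xb) (B.y2 - yb) := by
  simp only [iou, inter, area, cornerIoU, min_self, min_sub_sub_left, max_comm xb, max_comm yb]

lemma max_mul_min_le_cornerIoU_denom {a b c d : ℝ} (ha : 0 ≤ a) (hc : 0 ≤ c) :
    max a c * min b d ≤ a * b + c * d - min a c * min b d := by
  have hsum : (max a c + min a c) * min b d = (a + c) * min b d := by rw [max_add_min]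
  nlinarith [mul_nonneg ha (sub_nonneg.2 (min_le_left b d)),
    mul_nonneg hc (sub_nonneg.2 (min_le_right b d))]

lemma mul_max_le_min_of_le_cornerIoU {a b c d T : ℝ} (ha : 0 < a) (hb : 0 < b) (hc : 0 < c)
    (hd : 0 < d) (hT : 0 ≤ T) (h : T ≤ cornerIoU a b c d) : T * max a c ≤ min a c := by
  have hbd : 0 < min b d := lt_min hb hd
  have hU := max_mul_min_le_cornerIoU_denom (b := b) (d := d) ha.le hc.le
  have hU_pos : 0 < a * b + c * d - min a c * min b d :=
    hU.trans_lt' (mul_pos (lt_max_of_lt_left ha) hbd)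
  rw [cornerIoU, le_div_iff₀ hU_pos] at h
  refine le_of_mul_le_mul_right ?_ hbd
  calc T * max a c * min b d ≤ T * (a * b + c * d - min a c * min b d) := by
        rw [mul_assoc]; exact mul_le_mul_of_nonneg_left hU hT
    _ ≤ min a c * min b d := h

lemma abs_sub_le_of_mul_max_le_min {a c T : ℝ} (hT0 : 0 < T) (hT1 : T ≤ 1)
    (h : T * max a c ≤ min a c) : |a - c| ≤ (1 - T) / T * a := by
  rw [← max_sub_min_eq_abs', div_mul_eq_mul_div, le_div_iff₀' hT0]
  nlinarith [min_le_left a c]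

lemma abs_sub_le_of_le_cornerIoU {a b c d T : ℝ} (ha : 0 < a) (hb : 0 < b) (hc : 0 < c)
    (hd : 0 < d) (hT0 : 0 < T) (hT1 : T ≤ 1) (h : T ≤ cornerIoU a b c d) :
    |a - c| ≤ (1 - T) / T * a :=
  abs_sub_le_of_mul_max_le_min hT0 hT1 (mul_max_le_min_of_le_cornerIoU ha hb hc hd hT0.le h)

theorem tl_feasible_degenerates_general (B : Box) (hB : B.valid) (T : ℝ)
    (hT0 : 0 < T) (hT1 : T ≤ 1) (xb yb : ℝ)
    (hx2 : xb < B.x2) (hy2 : yb < B.y2)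
    (hiou : T ≤ iou B ⟨xb, yb, B.x2, B.y2⟩) :
    |xb - B.x1| ≤ (1 - T) / T * (B.x2 - B.x1) ∧
    |yb - B.y1| ≤ (1 - T) / T * (B.y2 - B.y1) ∧
    (T = 1 → xb = B.x1 ∧ yb = B.y1) := by
  obtain ⟨hx1, hy1⟩ := hB
  rw [iou_eq_cornerIoU] at hiou
  have hx := abs_sub_le_of_le_cornerIoU (sub_pos.2 hx1) (sub_pos.2 hy1) (sub_pos.2 hx2)
    (sub_pos.2 hy2) hT0 hT1 hiou
  rw [cornerIoU_comm] at hiou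
  have hy := abs_sub_le_of_le_cornerIoU (sub_pos.2 hy1) (sub_pos.2 hx1) (sub_pos.2 hy2)
    (sub_pos.2 hx2) hT0 hT1 hiou
  rw [sub_sub_sub_cancel_left] at hx hy
  refine ⟨hx, hy, ?_⟩
  rintro rfl
  simp only [sub_self, zero_div, zero_mul, abs_nonpos_iff, sub_eq_zero] at hx hy
  exact ⟨hx, hy⟩

theorem tl_feasible_degenerates (B : Box) (hB : B.valid) (T : ℝ)
    (hT0 : 0 < T) (hT1 : T ≤ 1) (xb yb : ℝ)
    (hx2 : xb < B.x2) (hy2 : yb < B.y2)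
    (hI : 0 < inter B ⟨xb, yb, B.x2, B.y2⟩)
    (hiou : T ≤ iou B ⟨xb, yb, B.x2, B.y2⟩) :
    |xb - B.x1| ≤ (1 - T) / T * (B.x2 - B.x1) ∧
    |yb - B.y1| ≤ (1 - T) / T * (B.y2 - B.y1) ∧
    (T = 1 → xb = B.x1 ∧ yb = B.y1) :=
  tl_feasible_degenerates_general B hB T hT0 hT1 xb yb hx2 hy2 hiou
end

section
/- Correctness of the two-step generation in the nested case: let B = [x1,y1,x2,y2], T ∈ (0,1], and let (x̄1, ȳ1) satisfy x1 ≤ x̄1 < x2, y1 ≤ ȳ1 < y2 with (x2−x̄1)(y2−ȳ1) ≥ T·A(B). Then there exists a choice of bottom-right corner (x̄2, ȳ2) with x̄1 < x̄2 ≤ x2 and ȳ1 < ȳ2 ≤ y2 such that IoU(B, [x̄1,ȳ1,x̄2,ȳ2]) = T; in particular one may take (x̄2, ȳ2) on the curve (x̄2−x̄1)(ȳ2−ȳ1) = T·A(B) via ȳ2 = ȳ1 + T·A(B)/(x̄2−x̄1) for suitable x̄2. -/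
def Box.IsSubbox (C B : Box) : Prop :=
  B.x1 ≤ C.x1 ∧ C.x2 ≤ B.x2 ∧ B.y1 ≤ C.y1 ∧ C.y2 ≤ B.y2

theorem Box.valid.area_pos {B : Box} (hB : B.valid) : 0 < area B :=
  mul_pos (sub_pos.2 hB.1) (sub_pos.2 hB.2)

theorem inter_eq_area_of_isSubbox {B C : Box} (h : C.IsSubbox B) : inter B C = area C := by
  obtain ⟨hx1, hx2, hy1, hy2⟩ := h
  rw [inter, area, min_eq_left hx2, max_eq_left hx1, min_eq_left hy2, max_eq_left hy1]

theorem iou_eq_area_div_of_isSubbox {B C : Box} (h : C.IsSubbox B) :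
    iou B C = area C / area B := by
  rw [iou, inter_eq_area_of_isSubbox h, add_sub_cancel_right]

theorem exists_mul_eq_of_le_mul {a c h : ℝ} (ha : 0 < a) (hc : 0 < c) (hle : c ≤ a * h) :
    ∃ y, 0 < y ∧ y ≤ h ∧ a * y = c :=
  ⟨c / a, div_pos hc ha, (div_le_iff₀' ha).2 hle, mul_div_cancel₀ c ha.ne'⟩

theorem br_feasible_nonempty_general (B : Box) (T : ℝ)
    (hT0 : 0 < T) (xb yb : ℝ)
    (hx1 : B.x1 ≤ xb) (hx2 : xb < B.x2) (hy1 : B.y1 ≤ yb) (hy2 : yb < B.y2)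
    (hfeas : T * area B ≤ (B.x2 - xb) * (B.y2 - yb)) :
    ∃ xb2 yb2 : ℝ, xb < xb2 ∧ xb2 ≤ B.x2 ∧ yb < yb2 ∧ yb2 ≤ B.y2 ∧
      (xb2 - xb) * (yb2 - yb) = T * area B ∧
      iou B ⟨xb, yb, xb2, yb2⟩ = T := by
  have hB : B.valid := ⟨hx1.trans_lt hx2, hy1.trans_lt hy2⟩
  obtain ⟨h, h_pos, h_le, h_area⟩ :=
    exists_mul_eq_of_le_mul (sub_pos.2 hx2) (mul_pos hT0 hB.area_pos) hfeas
  have h_sub : Box.IsSubbox ⟨xb, yb, B.x2, yb + h⟩ B :=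
    ⟨hx1, le_rfl, hy1, by linarith⟩
  have h_area' : (B.x2 - xb) * (yb + h - yb) = T * area B := by rwa [add_sub_cancel_left]
  refine ⟨B.x2, yb + h, hx2, le_rfl, by linarith, by linarith, h_area', ?_⟩
  rw [iou_eq_area_div_of_isSubbox h_sub, area, h_area', mul_div_cancel_right₀ _ hB.area_pos.ne']

theorem br_feasible_nonempty (B : Box) (hB : B.valid) (T : ℝ)
    (hT0 : 0 < T) (hT1 : T ≤ 1) (xb yb : ℝ)
    (hx1 : B.x1 ≤ xb) (hx2 : xb < B.x2) (hy1 : B.y1 ≤ yb) (hy2 : yb < B.y2)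
    (hfeas : T * area B ≤ (B.x2 - xb) * (B.y2 - yb)) :
    ∃ xb2 yb2 : ℝ, xb < xb2 ∧ xb2 ≤ B.x2 ∧ yb < yb2 ∧ yb2 ≤ B.y2 ∧
      (xb2 - xb) * (yb2 - yb) = T * area B ∧
      iou B ⟨xb, yb, xb2, yb2⟩ = T :=
  br_feasible_nonempty_general B T hT0 xb yb hx1 hx2 hy1 hy2 hfeas
end
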